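/- Let (Ω, 𝔉, P) be a probability space with a filtration 𝔅₀ ⊆ 𝔅₁ ⊆ … ⊆ 𝔅_t, and let p_min > 0 and h > 0 with M := 1/(p_min·h). Suppose X₁, …, X_t are real random variables and μ₁, …, μ_t are real random variables such that for every s: X_s is 𝔅_s-measurable, μ_s is 𝔅_{s−1}-measurable with 0 ≤ μ_s ≤ 1 almost surely, E[X_s | 𝔅_{s−1}] = μ_s almost surely, 0 ≤ X_s ≤ M almost surely, and E[X_s² | 𝔅_{s−1}] ≤ M·μ_s almost surely. Then for any δ' ∈ (0, 1/e), with probability at least 1 − δ', |(1/t)·Σ_{s=1}^t X_s − (1/t)·Σ_{s=1}^t μ_s| ≤ √(((1/t)·Σ_{s=1}^t μ_s) · 16·ln(2t/δ')/(t·p_min·h)) + 2·ln(2t/δ')/(t·p_min·h). -/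

import Mathlib

open MeasureTheory Finset Real

/-!
For `|θ| B ≤ 1` one has `exp (θ x) ≤ 1 + θ x + θ² x²` on `[0, B]`, so the conditional moment
generating function of `X s` is at most `exp (θ V s + θ² B V s)` and
`exp (θ ∑ (X s - V s) - θ² B ∑ V s)` is a supermartingale; by Markov's inequality its exponent
exceeds `L = log (2t / δ')` with probability at most `δ' / (2t)`. A union bound over the `2t`
exponents `θ = ± 2⁻ᵏ / B`, `k < t`, leaves an event of probability at least `1 - δ'` on which
the grid point nearest the optimal `θ = √(L / (B ∑ V s))` gives
`|∑ (X s - V s)| ≤ 4 √(L B ∑ V s) + 2 L B`.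
-/

lemma le_four_sqrt_mul_add_two_mul_of_forall_lt {t : ℕ} {a w e : ℝ} (ht : 0 < t) (ha : 0 < a)
    (hw : 0 ≤ w) (hwt : w ≤ a * 4 ^ (t - 1)) (he : ∀ k < t, e < a * 2 ^ k + w / 2 ^ k) :
    e ≤ 4 * √(a * w) + 2 * a := by
  have hr0 : 0 ≤ √(a * w) := sqrt_nonneg _
  rcases le_or_gt w a with hwa | haw
  · have h0 := he 0 ht
    rw [pow_zero, mul_one, div_one] at h0
    linarith
  · have hw' : 0 < w := ha.trans haw
    set r := √(a * w)
    have hr : 0 < r := sqrt_pos.2 (by positivity)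
    have hr2 : r ^ 2 = a * w := sq_sqrt (by positivity)
    have hrw : r ≤ w := by nlinarith
    -- `2 ^ k ≤ √(w / a) < 2 ^ (k + 1)`
    obtain ⟨k, hk, hk'⟩ := exists_nat_pow_near ((one_le_div hr).2 hrw) one_lt_two
    rw [le_div_iff₀ hr] at hk
    rw [div_lt_iff₀ hr, pow_succ] at hk'
    have hkt : k < t := by
      have h4 : (4 : ℝ) ^ k ≤ 4 ^ (t - 1) := by
        have : 2 ^ k * 2 ^ k * a * w ≤ w * w := by nlinarith
        have : a * (2 ^ k * 2 ^ k) ≤ a * 4 ^ (t - 1) := by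
          nlinarith [le_of_mul_le_mul_right this hw']
        rw [show (4 : ℝ) ^ k = 2 ^ k * 2 ^ k by rw [← mul_pow]; norm_num]
        exact le_of_mul_le_mul_left this ha
      have := (pow_le_pow_iff_right₀ (by norm_num : (1 : ℝ) < 4)).1 h4
      omega
    have h1 : a * 2 ^ k ≤ r := by nlinarith
    have h2 : w / 2 ^ k < 2 * r := by rw [div_lt_iff₀ (by positivity)]; linarith
    linarith [he k hkt]

lemma lt_mul_two_pow_add_div_two_pow {B L e w : ℝ} (hB : 0 < B) (k : ℕ)
    (h : 1 / (B * 2 ^ k) * e - (1 / (B * 2 ^ k)) ^ 2 * B * w < L) :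
    e < L * B * 2 ^ k + w / 2 ^ k := by
  have : 1 / (B * 2 ^ k) * e - (1 / (B * 2 ^ k)) ^ 2 * B * w = (e - w / 2 ^ k) / (B * 2 ^ k) := by
    field_simp
  rw [this, div_lt_iff₀ (by positivity)] at h
  linarith

lemma abs_le_four_sqrt_mul_add_of_forall_lt {t : ℕ} {B L D W : ℝ} (ht : 0 < t) (hB : 0 < B)
    (hL : 1 ≤ L) (hW : 0 ≤ W) (hWt : W ≤ t * B)
    (h : ∀ k < t, ∀ θ : ℝ, |θ| = 1 / (B * 2 ^ k) → θ * D - θ ^ 2 * B * W < L) :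
    |D| ≤ 4 * √(L * B * W) + 2 * (L * B) := by
  have ht4 : (t : ℝ) ≤ 4 ^ (t - 1) := by
    have : t ≤ 4 ^ (t - 1) := calc
      t ≤ 2 ^ (t - 1) := by have := Nat.lt_two_pow_self (n := t - 1); omega
      _ ≤ 4 ^ (t - 1) := Nat.pow_le_pow_left (by norm_num) _
    exact_mod_cast this
  have hWt' : W ≤ L * B * 4 ^ (t - 1) := by
    nlinarith [mul_le_mul_of_nonneg_right ht4 hB.le,
      mul_le_mul_of_nonneg_right hL (by positivity : (0 : ℝ) ≤ B * 4 ^ (t - 1))]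
  have hside : ∀ e : ℝ, (∀ k < t, 1 / (B * 2 ^ k) * e - (1 / (B * 2 ^ k)) ^ 2 * B * W < L) →
      e ≤ 4 * √(L * B * W) + 2 * (L * B) := fun e he =>
    le_four_sqrt_mul_add_two_mul_of_forall_lt ht (by positivity) hW hWt' fun k hk =>
      lt_mul_two_pow_add_div_two_pow hB k (he k hk)
  have hneg := hside (-D) fun k hk => by
    have := h k hk (-(1 / (B * 2 ^ k))) (by rw [abs_neg, abs_of_pos (by positivity)])
    rwa [neg_sq, neg_mul_comm] at this
  exact abs_le.2 ⟨by linarith, hside D fun k hk => h k hk _ (abs_of_pos (by positivity))⟩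

lemma abs_one_div_mul_sub_le {t p h L x y : ℝ} (ht : 0 < t)
    (hxy : |x - y| ≤ 4 * √(L * (1 / (p * h)) * y) + 2 * (L * (1 / (p * h)))) :
    |1 / t * x - 1 / t * y| ≤
      √(1 / t * y * (16 * L / (t * p * h))) + 2 * L / (t * p * h) := by
  have hsq : 1 / t * y * (16 * L / (t * p * h)) = (4 / t) ^ 2 * (L * (1 / (p * h)) * y) := by
    field_simp
    ring
  rw [hsq, sqrt_mul (sq_nonneg _), sqrt_sq (by positivity), ← mul_sub, abs_mul,
    abs_of_pos (by positivity)]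
  calc 1 / t * |x - y| ≤ 1 / t * (4 * √(L * (1 / (p * h)) * y) + 2 * (L * (1 / (p * h)))) :=
        mul_le_mul_of_nonneg_left hxy (by positivity)
    _ = _ := by field_simp

section Probability

variable {Ω : Type*} {m m0 : MeasurableSpace Ω} {μ : Measure Ω}

lemma integrable_exp_mul_of_abs_le [IsFiniteMeasure μ] {X : Ω → ℝ} {C : ℝ}
    (hX : AEStronglyMeasurable X μ) (hXC : ∀ᵐ ω ∂μ, |X ω| ≤ C) (θ : ℝ) :
    Integrable (fun ω => exp (θ * X ω)) μ := by
  refine .of_bound (continuous_exp.comp_aestronglyMeasurable (hX.const_mul θ)) (exp (|θ| * C)) ?_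
  filter_upwards [hXC] with ω hω
  rw [norm_of_nonneg (exp_pos _).le, exp_le_exp]
  calc θ * X ω ≤ |θ| * |X ω| := (le_abs_self _).trans (abs_mul _ _).le
    _ ≤ |θ| * C := mul_le_mul_of_nonneg_left hω (abs_nonneg θ)

lemma ae_mem_Icc_of_condExp_ae_eq {f g : Ω → ℝ} {B : ℝ} (hfg : μ[f|m] =ᵐ[μ] g)
    (hf : ∀ᵐ ω ∂μ, f ω ∈ Set.Icc 0 B) : ∀ᵐ ω ∂μ, g ω ∈ Set.Icc 0 B := by
  have habs : ∀ᵐ ω ∂μ, |f ω| ≤ B := by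
    filter_upwards [hf] with ω hω
    rw [abs_of_nonneg hω.1]
    exact hω.2
  have hnonneg : 0 ≤ᵐ[μ] μ[f|m] := condExp_nonneg (by filter_upwards [hf] with ω hω using hω.1)
  filter_upwards [hfg, hnonneg, ae_bdd_abs_condExp_of_ae_bdd_abs (m := m) habs]
    with ω hfgω h0 hB
  rw [← hfgω]
  exact ⟨h0, (le_abs_self _).trans hB⟩

lemma condExp_exp_mul_le [IsFiniteMeasure μ] (hm : m ≤ m0) {X : Ω → ℝ} {C θ : ℝ}
    (hX : AEStronglyMeasurable X μ) (hXC : ∀ᵐ ω ∂μ, |X ω| ≤ C) (hθ : |θ| * C ≤ 1) :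
    μ[fun ω => exp (θ * X ω)|m] ≤ᵐ[μ]
      fun ω => exp (θ * μ[X|m] ω + θ ^ 2 * μ[fun ω => X ω ^ 2|m] ω) := by
  have hXint : Integrable X μ := .of_bound hX C (by simpa only [norm_eq_abs] using hXC)
  have hX2int : Integrable (fun ω => X ω ^ 2) μ := by
    refine .of_bound (hX.pow 2) (C ^ 2) ?_
    filter_upwards [hXC] with ω hω
    rw [norm_eq_abs, abs_pow]
    exact pow_le_pow_left₀ (abs_nonneg _) hω 2
  have hquad : (fun ω => exp (θ * X ω)) ≤ᵐ[μ]
      (fun _ => (1 : ℝ)) + (θ • X + θ ^ 2 • fun ω => X ω ^ 2) := by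
    filter_upwards [hXC] with ω hω
    have h1 : |θ * X ω| ≤ 1 := by
      rw [abs_mul]
      exact (mul_le_mul_of_nonneg_left hω (abs_nonneg θ)).trans hθ
    have h2 := (abs_le.1 (abs_exp_sub_one_sub_id_le h1)).2
    simp only [Pi.add_apply, Pi.smul_apply, smul_eq_mul]
    nlinarith
  have hlin : μ[(fun _ => (1 : ℝ)) + (θ • X + θ ^ 2 • fun ω => X ω ^ 2)|m] =ᵐ[μ]
      (fun _ => (1 : ℝ)) + (θ • μ[X|m] + θ ^ 2 • μ[fun ω => X ω ^ 2|m]) := by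
    refine (condExp_add (integrable_const 1) ((hXint.smul θ).add (hX2int.smul _)) m).trans ?_
    rw [condExp_const hm]
    exact (condExp_add (hXint.smul θ) (hX2int.smul _) m).add_left.trans
      ((condExp_smul θ X m).add (condExp_smul _ _ m)).add_left
  filter_upwards [condExp_mono (m := m) (integrable_exp_mul_of_abs_le hX hXC θ)
    ((integrable_const 1).add ((hXint.smul θ).add (hX2int.smul _))) hquad, hlin] with ω h1 h2
  rw [h2] at h1
  simp only [Pi.add_apply, Pi.smul_apply, smul_eq_mul] at h1
  linarith [add_one_le_exp (θ * μ[X|m] ω + θ ^ 2 * μ[fun ω => X ω ^ 2|m] ω)]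

lemma measure_le_le_ofReal_exp_neg [IsFiniteMeasure μ] {S : Ω → ℝ}
    (hint : Integrable (fun ω => exp (S ω)) μ) (hle : ∫ ω, exp (S ω) ∂μ ≤ 1) (L : ℝ) :
    μ {ω | L ≤ S ω} ≤ ENNReal.ofReal (exp (-L)) := by
  have hmgf : ProbabilityTheory.mgf S μ 1 ≤ 1 := by
    simpa only [ProbabilityTheory.mgf, one_mul] using hle
  have h := ProbabilityTheory.measure_ge_le_exp_mul_mgf L zero_le_one
    (by simpa only [one_mul] using hint)
  rw [neg_one_mul] at h
  refine (ENNReal.le_ofReal_iff_toReal_le (measure_ne_top μ _) (exp_pos _).le).2 ?_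
  exact h.trans (mul_le_of_le_one_right (exp_pos _).le hmgf)

lemma ofReal_one_sub_le_measure [IsProbabilityMeasure μ] {s : Set Ω} {δ : ℝ} (hδ : 0 ≤ δ)
    (hs : μ sᶜ ≤ ENNReal.ofReal δ) :
    ENNReal.ofReal (1 - δ) ≤ μ s := by
  rw [ENNReal.ofReal_sub _ hδ, ENNReal.ofReal_one, tsub_le_iff_right]
  calc (1 : ENNReal) = μ (s ∪ sᶜ) := by rw [Set.union_compl_self, measure_univ]
    _ ≤ μ s + μ sᶜ := measure_union_le _ _
    _ ≤ μ s + ENNReal.ofReal δ := add_le_add le_rfl hs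

lemma integral_mul_le_of_condExp_le [IsFiniteMeasure μ] (hm : m ≤ m0) {A Y Z : Ω → ℝ}
    (hA : StronglyMeasurable[m] A) (hA0 : 0 ≤ A) (hAY : Integrable (A * Y) μ)
    (hY : Integrable Y μ) (hAZ : Integrable (A * Z) μ) (hYZ : μ[Y|m] ≤ᵐ[μ] Z) :
    ∫ ω, (A * Y) ω ∂μ ≤ ∫ ω, (A * Z) ω ∂μ := by
  rw [← integral_condExp hm]
  refine integral_mono_ae integrable_condExp hAZ ?_
  filter_upwards [condExp_mul_of_stronglyMeasurable_left hA hAY hY, hYZ] with ω h1 h2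
  rw [h1, Pi.mul_apply, Pi.mul_apply]
  exact mul_le_mul_of_nonneg_left h2 (hA0 ω)

lemma integral_exp_sum_sub_le_one [IsProbabilityMeasure μ] {𝔅 : Filtration ℕ m0}
    {ξ c : ℕ → Ω → ℝ} {C : ℝ} {N : ℕ}
    (hξ : ∀ s ∈ Icc 1 N, StronglyMeasurable[𝔅 s] (ξ s))
    (hc : ∀ s ∈ Icc 1 N, StronglyMeasurable[𝔅 (s - 1)] (c s))
    (hint : ∀ s ∈ Icc 1 N, Integrable (fun ω => exp (ξ s ω)) μ)
    (hbdd : ∀ s ∈ Icc 1 N, ∀ᵐ ω ∂μ, ξ s ω - c s ω ≤ C)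
    (hmgf : ∀ s ∈ Icc 1 N,
      μ[fun ω => exp (ξ s ω)|𝔅 (s - 1)] ≤ᵐ[μ] fun ω => exp (c s ω)) :
    Integrable (fun ω => exp (∑ s ∈ Icc 1 N, (ξ s ω - c s ω))) μ ∧
      ∫ ω, exp (∑ s ∈ Icc 1 N, (ξ s ω - c s ω)) ∂μ ≤ 1 := by
  set S : ℕ → Ω → ℝ := fun n ω => ∑ s ∈ Icc 1 n, (ξ s ω - c s ω)
  have hmem : ∀ {n s}, n ≤ N → s ∈ Icc 1 n → s ∈ Icc 1 N := fun hn hs =>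
    Icc_subset_Icc_right hn hs
  have hSmeas : ∀ n ≤ N, StronglyMeasurable[𝔅 n] (S n) := by
    intro n hn
    refine Finset.stronglyMeasurable_fun_sum _ fun s hs => ?_
    have hsn := (mem_Icc.1 hs).2
    exact ((hξ s (hmem hn hs)).mono (𝔅.mono hsn)).sub
      ((hc s (hmem hn hs)).mono (𝔅.mono (by omega)))
  have hSint : ∀ n ≤ N, Integrable (fun ω => exp (S n ω)) μ := by
    intro n hn
    refine .of_bound (continuous_exp.comp_stronglyMeasurable
      ((hSmeas n hn).mono (𝔅.le n))).aestronglyMeasurable (exp (n * C)) ?_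
    filter_upwards [(Filter.eventually_all_finset _).2 fun s hs => hbdd s (hmem hn hs)]
      with ω hω
    rw [norm_of_nonneg (exp_pos _).le, exp_le_exp]
    simpa [S] using sum_le_card_nsmul (Icc 1 n) _ _ hω
  refine ⟨hSint N le_rfl, ?_⟩
  suffices ∀ n ≤ N, ∫ ω, exp (S n ω) ∂μ ≤ 1 from this N le_rfl
  intro n
  induction n with
  | zero => simp [S]
  | succ n ih =>
    intro hn
    have hs : n + 1 ∈ Icc 1 N := mem_Icc.2 ⟨by omega, hn⟩
    set A : Ω → ℝ := fun ω => exp (S n ω - c (n + 1) ω)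
    have hsplit : (fun ω => exp (S (n + 1) ω)) = A * fun ω => exp (ξ (n + 1) ω) := by
      ext ω
      simp only [S, A, Pi.mul_apply, ← exp_add, sum_Icc_succ_top (by omega : 1 ≤ n + 1)]
      ring_nf
    have hmerge : (fun ω => exp (S n ω)) = A * fun ω => exp (c (n + 1) ω) := by
      ext ω
      simp only [A, Pi.mul_apply, ← exp_add, sub_add_cancel]
    have hA : StronglyMeasurable[𝔅 n] A :=
      continuous_exp.comp_stronglyMeasurable
        ((hSmeas n (by omega)).sub (by simpa using hc (n + 1) hs))
    calc ∫ ω, exp (S (n + 1) ω) ∂μ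
        ≤ ∫ ω, exp (S n ω) ∂μ := by
          rw [hsplit, hmerge]
          refine integral_mul_le_of_condExp_le (𝔅.le n) hA (fun ω => (exp_pos _).le)
            (hsplit ▸ hSint (n + 1) hn) (hint (n + 1) hs) (hmerge ▸ hSint n (by omega)) ?_
          simpa using hmgf (n + 1) hs
      _ ≤ 1 := ih (by omega)

end Probability

section IPS

variable {Ω : Type*} {m0 : MeasurableSpace Ω} {μ : Measure Ω} [IsProbabilityMeasure μ]
  {𝔅 : Filtration ℕ m0} {t : ℕ} {B : ℝ} {X V : ℕ → Ω → ℝ}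

lemma measure_le_mul_sum_sub_le_ofReal_exp_neg
    (hXmeas : ∀ s ∈ Icc 1 t, StronglyMeasurable[𝔅 s] (X s))
    (hVmeas : ∀ s ∈ Icc 1 t, StronglyMeasurable[𝔅 (s - 1)] (V s))
    (hcond : ∀ s ∈ Icc 1 t, μ[X s|𝔅 (s - 1)] =ᵐ[μ] V s)
    (hXrange : ∀ s ∈ Icc 1 t, ∀ᵐ ω ∂μ, X s ω ∈ Set.Icc 0 B)
    (hvar : ∀ s ∈ Icc 1 t, ∀ᵐ ω ∂μ, μ[fun ω' => X s ω' ^ 2|𝔅 (s - 1)] ω ≤ B * V s ω)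
    {θ : ℝ} (hθ : |θ| * B ≤ 1) (L : ℝ) :
    μ {ω | L ≤ θ * (∑ s ∈ Icc 1 t, X s ω - ∑ s ∈ Icc 1 t, V s ω)
        - θ ^ 2 * B * ∑ s ∈ Icc 1 t, V s ω} ≤ ENNReal.ofReal (exp (-L)) := by
  have hXabs : ∀ s ∈ Icc 1 t, ∀ᵐ ω ∂μ, |X s ω| ≤ B := fun s hs => by
    filter_upwards [hXrange s hs] with ω hω
    rw [abs_of_nonneg hω.1]
    exact hω.2
  have hXae : ∀ s ∈ Icc 1 t, AEStronglyMeasurable (X s) μ := fun s hs =>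
    ((hXmeas s hs).mono (𝔅.le s)).aestronglyMeasurable
  obtain ⟨hint, hle⟩ := integral_exp_sum_sub_le_one (μ := μ) (C := 1)
    (ξ := fun s ω => θ * X s ω) (c := fun s ω => θ * V s ω + θ ^ 2 * (B * V s ω))
    (fun s hs => (hXmeas s hs).const_mul θ)
    (fun s hs => ((hVmeas s hs).const_mul θ).add (((hVmeas s hs).const_mul B).const_mul _))
    (fun s hs => integrable_exp_mul_of_abs_le (hXae s hs) (hXabs s hs) θ)
    (fun s hs => by
      filter_upwards [hXrange s hs, ae_mem_Icc_of_condExp_ae_eq (hcond s hs) (hXrange s hs)]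
        with ω hX hV
      have hBV : 0 ≤ θ ^ 2 * (B * V s ω) :=
        mul_nonneg (sq_nonneg θ) (mul_nonneg (hV.1.trans hV.2) hV.1)
      calc θ * X s ω - (θ * V s ω + θ ^ 2 * (B * V s ω)) ≤ |θ| * |X s ω - V s ω| := by
            linarith [abs_mul θ (X s ω - V s ω), le_abs_self (θ * (X s ω - V s ω))]
        _ ≤ |θ| * B := mul_le_mul_of_nonneg_left
            (abs_sub_le_of_nonneg_of_le hX.1 hX.2 hV.1 hV.2) (abs_nonneg θ)
        _ ≤ 1 := hθ)
    (fun s hs => by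
      filter_upwards [condExp_exp_mul_le (𝔅.le (s - 1)) (hXae s hs) (hXabs s hs) hθ,
        hcond s hs, hvar s hs] with ω h hc hv
      rw [hc] at h
      exact h.trans (exp_le_exp.2 (by gcongr)))
  refine (measure_mono fun ω hω => ?_).trans (measure_le_le_ofReal_exp_neg hint hle L)
  simp only [Set.mem_ofPred_eq, sum_sub_distrib, sum_add_distrib, ← mul_sum] at hω ⊢
  linarith

lemma measure_exists_abs_eq_le
    (hXmeas : ∀ s ∈ Icc 1 t, StronglyMeasurable[𝔅 s] (X s))
    (hVmeas : ∀ s ∈ Icc 1 t, StronglyMeasurable[𝔅 (s - 1)] (V s))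
    (hcond : ∀ s ∈ Icc 1 t, μ[X s|𝔅 (s - 1)] =ᵐ[μ] V s)
    (hXrange : ∀ s ∈ Icc 1 t, ∀ᵐ ω ∂μ, X s ω ∈ Set.Icc 0 B)
    (hvar : ∀ s ∈ Icc 1 t, ∀ᵐ ω ∂μ, μ[fun ω' => X s ω' ^ 2|𝔅 (s - 1)] ω ≤ B * V s ω)
    {η : ℝ} (hη : 0 ≤ η) (hηB : η * B ≤ 1) (L : ℝ) :
    μ {ω | ∃ θ : ℝ, |θ| = η ∧ L ≤ θ * (∑ s ∈ Icc 1 t, X s ω - ∑ s ∈ Icc 1 t, V s ω)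
        - θ ^ 2 * B * ∑ s ∈ Icc 1 t, V s ω} ≤
      ENNReal.ofReal (exp (-L)) + ENNReal.ofReal (exp (-L)) := by
  set event : ℝ → Set Ω := fun θ => {ω | L ≤ θ * (∑ s ∈ Icc 1 t, X s ω - ∑ s ∈ Icc 1 t, V s ω)
    - θ ^ 2 * B * ∑ s ∈ Icc 1 t, V s ω}
  have hsplit : {ω | ∃ θ : ℝ, |θ| = η ∧ ω ∈ event θ} ⊆ event η ∪ event (-η) := by
    rintro ω ⟨θ, hθ, hω⟩
    rcases (abs_eq hη).1 hθ with rfl | rfl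
    exacts [Or.inl hω, Or.inr hω]
  refine (measure_mono hsplit).trans ((measure_union_le _ _).trans (add_le_add ?_ ?_))
  exacts [measure_le_mul_sum_sub_le_ofReal_exp_neg hXmeas hVmeas hcond hXrange hvar
      (by rwa [abs_of_nonneg hη]) L,
    measure_le_mul_sum_sub_le_ofReal_exp_neg hXmeas hVmeas hcond hXrange hvar
      (by rwa [abs_neg, abs_of_nonneg hη]) L]

lemma measure_lt_abs_sum_sub_le_ofReal
    (hXmeas : ∀ s ∈ Icc 1 t, StronglyMeasurable[𝔅 s] (X s))
    (hVmeas : ∀ s ∈ Icc 1 t, StronglyMeasurable[𝔅 (s - 1)] (V s))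
    (hcond : ∀ s ∈ Icc 1 t, μ[X s|𝔅 (s - 1)] =ᵐ[μ] V s)
    (hXrange : ∀ s ∈ Icc 1 t, ∀ᵐ ω ∂μ, X s ω ∈ Set.Icc 0 B)
    (hvar : ∀ s ∈ Icc 1 t, ∀ᵐ ω ∂μ, μ[fun ω' => X s ω' ^ 2|𝔅 (s - 1)] ω ≤ B * V s ω)
    (ht : 0 < t) (hB : 0 < B) {L : ℝ} (hL : 1 ≤ L) :
    μ {ω | 4 * √(L * B * ∑ s ∈ Icc 1 t, V s ω) + 2 * (L * B) <
        |∑ s ∈ Icc 1 t, X s ω - ∑ s ∈ Icc 1 t, V s ω|} ≤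
      ENNReal.ofReal (2 * t * exp (-L)) := by
  set bad : ℕ → Set Ω := fun k => {ω | ∃ θ : ℝ, |θ| = 1 / (B * 2 ^ k) ∧
    L ≤ θ * (∑ s ∈ Icc 1 t, X s ω - ∑ s ∈ Icc 1 t, V s ω) - θ ^ 2 * B * ∑ s ∈ Icc 1 t, V s ω}
  have hbad : ∀ k, μ (bad k) ≤ ENNReal.ofReal (exp (-L)) + ENNReal.ofReal (exp (-L)) := by
    intro k
    refine measure_exists_abs_eq_le hXmeas hVmeas hcond hXrange hvar (by positivity) ?_ L
    rw [div_mul_eq_mul_div, one_mul, div_le_one (by positivity)]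
    exact le_mul_of_one_le_right hB.le (one_le_pow₀ one_le_two)
  set G : Set Ω := {ω | ∀ s ∈ Icc 1 t, V s ω ∈ Set.Icc 0 B}
  have hG : μ Gᶜ = 0 := ae_iff.1 <| (Filter.eventually_all_finset _).2 fun s hs =>
    ae_mem_Icc_of_condExp_ae_eq (hcond s hs) (hXrange s hs)
  have hsub : {ω | 4 * √(L * B * ∑ s ∈ Icc 1 t, V s ω) + 2 * (L * B) <
      |∑ s ∈ Icc 1 t, X s ω - ∑ s ∈ Icc 1 t, V s ω|} ⊆ (⋃ k ∈ range t, bad k) ∪ Gᶜ := by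
    intro ω hω
    by_contra hgood
    simp only [Set.mem_union, Set.mem_iUnion, mem_range, Set.mem_compl_iff, not_or,
      not_exists, not_not] at hgood
    obtain ⟨hnbad, hωG⟩ := hgood
    refine (not_le.2 hω) (abs_le_four_sqrt_mul_add_of_forall_lt ht hB hL
      (sum_nonneg fun s hs => (hωG s hs).1) ?_ fun k hk θ hθ => not_le.1 fun hle =>
        hnbad k hk ⟨θ, hθ, hle⟩)
    simpa using sum_le_card_nsmul _ _ _ fun s hs => (hωG s hs).2
  calc _ ≤ μ ((⋃ k ∈ range t, bad k) ∪ Gᶜ) := measure_mono hsub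
    _ ≤ ∑ k ∈ range t, μ (bad k) + μ Gᶜ :=
      (measure_union_le _ _).trans (add_le_add (measure_biUnion_finset_le _ _) le_rfl)
    _ ≤ ∑ _k ∈ range t, (ENNReal.ofReal (exp (-L)) + ENNReal.ofReal (exp (-L))) := by
      rw [hG, add_zero]
      exact sum_le_sum fun k _ => hbad k
    _ = ENNReal.ofReal (2 * t * exp (-L)) := by
      rw [sum_const, card_range, nsmul_eq_mul, ← ENNReal.ofReal_add (by positivity) (by positivity),
        ← ENNReal.ofReal_natCast t, ← ENNReal.ofReal_mul (by positivity)]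
      ring_nf

end IPS

theorem ips_predictable_sequence_concentration_general
    {Ω : Type*} {m0 : MeasurableSpace Ω} {μ : Measure Ω} [IsProbabilityMeasure μ]
    (t : ℕ) (𝔅 : Filtration ℕ m0)
    (pmin h : ℝ) (hpmin : 0 < pmin) (hh : 0 < h)
    (X V : ℕ → Ω → ℝ)
    (hXmeas : ∀ s ∈ Finset.Icc 1 t, StronglyMeasurable[𝔅 s] (X s))
    (hVmeas : ∀ s ∈ Finset.Icc 1 t, StronglyMeasurable[𝔅 (s - 1)] (V s))
    (hcond : ∀ s ∈ Finset.Icc 1 t, μ[X s | 𝔅 (s - 1)] =ᵐ[μ] V s)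
    (hXrange : ∀ s ∈ Finset.Icc 1 t, ∀ᵐ ω ∂μ, X s ω ∈ Set.Icc (0 : ℝ) (1 / (pmin * h)))
    (hvar : ∀ s ∈ Finset.Icc 1 t, ∀ᵐ ω ∂μ,
      (μ[(fun ω' => (X s ω') ^ 2) | 𝔅 (s - 1)]) ω ≤ (1 / (pmin * h)) * V s ω)
    (δ' : ℝ) (hδ' : δ' ∈ Set.Ioo (0 : ℝ) (1 / Real.exp 1)) :
    ENNReal.ofReal (1 - δ') ≤
      μ {ω | |(1 / t : ℝ) * ∑ s ∈ Finset.Icc 1 t, X s ω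
              - (1 / t : ℝ) * ∑ s ∈ Finset.Icc 1 t, V s ω| ≤
          Real.sqrt (((1 / t : ℝ) * ∑ s ∈ Finset.Icc 1 t, V s ω)
              * (16 * Real.log (2 * t / δ') / (t * pmin * h)))
            + 2 * Real.log (2 * t / δ') / (t * pmin * h)} := by
  obtain ⟨hδ0, hδe⟩ := hδ'
  rcases Nat.eq_zero_or_pos t with rfl | ht
  · -- with `1 / 0 = 0` and empty sums, the event is `0 ≤ 0`
    simpa using hδ0.le
  have htR : (0 : ℝ) < t := Nat.cast_pos.2 ht
  set L := log (2 * t / δ')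
  have hexpL : 2 * t * exp (-L) = δ' := by
    rw [exp_neg, exp_log (by positivity)]
    field_simp
  have hL : 1 ≤ L := by
    rw [le_log_iff_exp_le (by positivity), le_div_iff₀ hδ0]
    have := (lt_div_iff₀ (exp_pos 1)).1 hδe
    nlinarith [(Nat.one_le_cast (α := ℝ)).2 ht]
  refine ofReal_one_sub_le_measure hδ0.le ?_
  rw [← hexpL]
  refine le_trans (measure_mono fun ω hω => ?_) (measure_lt_abs_sum_sub_le_ofReal
    hXmeas hVmeas hcond hXrange hvar ht (by positivity) hL)
  exact not_le.1 fun hle => hω (abs_one_div_mul_sub_le htR hle)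

/-- Concentration of IPS estimates of smoothed policy losses along a predictable
sequence of policies (abstract martingale form; Lemma "unif-conv-log", item 1). -/
theorem ips_predictable_sequence_concentration
    {Ω : Type*} {m0 : MeasurableSpace Ω} {μ : Measure Ω} [IsProbabilityMeasure μ]
    (t : ℕ) (𝔅 : Filtration ℕ m0)
    (pmin h : ℝ) (hpmin : 0 < pmin) (hh : 0 < h)
    (X V : ℕ → Ω → ℝ)
    (hXmeas : ∀ s ∈ Finset.Icc 1 t, StronglyMeasurable[𝔅 s] (X s))
    (hVmeas : ∀ s ∈ Finset.Icc 1 t, StronglyMeasurable[𝔅 (s - 1)] (V s))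
    (hVrange : ∀ s ∈ Finset.Icc 1 t, ∀ᵐ ω ∂μ, V s ω ∈ Set.Icc (0 : ℝ) 1)
    (hcond : ∀ s ∈ Finset.Icc 1 t, μ[X s | 𝔅 (s - 1)] =ᵐ[μ] V s)
    (hXrange : ∀ s ∈ Finset.Icc 1 t, ∀ᵐ ω ∂μ, X s ω ∈ Set.Icc (0 : ℝ) (1 / (pmin * h)))
    (hvar : ∀ s ∈ Finset.Icc 1 t, ∀ᵐ ω ∂μ,
      (μ[(fun ω' => (X s ω') ^ 2) | 𝔅 (s - 1)]) ω ≤ (1 / (pmin * h)) * V s ω)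
    (δ' : ℝ) (hδ' : δ' ∈ Set.Ioo (0 : ℝ) (1 / Real.exp 1)) :
    ENNReal.ofReal (1 - δ') ≤
      μ {ω | |(1 / t : ℝ) * ∑ s ∈ Finset.Icc 1 t, X s ω
              - (1 / t : ℝ) * ∑ s ∈ Finset.Icc 1 t, V s ω| ≤
          Real.sqrt (((1 / t : ℝ) * ∑ s ∈ Finset.Icc 1 t, V s ω)
              * (16 * Real.log (2 * t / δ') / (t * pmin * h)))
            + 2 * Real.log (2 * t / δ') / (t * pmin * h)} :=
  ips_predictable_sequence_concentration_general t 𝔅 pmin h hpmin hh X V hXmeas hVmeas hcond hXrange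
    hvar δ' hδ'
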